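/- arXiv:1703.09571 — 4 statements merged into one kernel-verified Lean document; each statement's English description precedes it below -/
import Mathlib

section
/- Let H be a real Hilbert space and T : H → H a bounded linear operator that is self-adjoint and monotone (⟨T ξ, ξ⟩ ≥ 0 for all ξ). Let f†, f*, w, y, y_δ ∈ H and δ > 0, ρ > 0 satisfy T f† = y (exact solution), f† − f* = T w (source condition) and ‖y_δ − y‖ ≤ δ (noise bound). Let f_ρ be the unique element of H satisfying the Lavrentiev equation T f_ρ + ρ(f_ρ − f*) = y_δ. Then ‖f_ρ − f†‖ ≤ δ/ρ + ρ‖w‖. -/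
open RealInnerProductSpace

/-- `T + ρ·id` is surjective for a monotone bounded operator `T` and `ρ > 0`
(Lax–Milgram). -/
lemma lavrentiev_surj {H : Type*} [NormedAddCommGroup H] [InnerProductSpace ℝ H]
    [CompleteSpace H] (T : H →L[ℝ] H) (ρ : ℝ) (hρ : 0 < ρ)
    (hmono : ∀ ξ : H, (0:ℝ) ≤ inner ℝ (T ξ) ξ) (d : H) :
    ∃ v : H, T v + ρ • v = d := by
  set S : H →L[ℝ] H := T + ρ • ContinuousLinearMap.id ℝ H with hSdef
  have hS : ∀ x, S x = T x + ρ • x := fun x => rfl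
  set B : H →L[ℝ] H →L[ℝ] ℝ := (innerSL ℝ).comp S with hB
  have hcoer : IsCoercive B := by
    refine ⟨ρ, hρ, fun x => ?_⟩
    have : B x x = ⟪S x, x⟫ := rfl
    rw [this, hS, inner_add_left, real_inner_smul_left, real_inner_self_eq_norm_mul_norm]
    nlinarith [hmono x]
  have hSB : ∀ x, InnerProductSpace.continuousLinearMapOfBilin B x = S x := by
    intro x
    apply ext_inner_right ℝ
    intro z
    rw [InnerProductSpace.continuousLinearMapOfBilin_apply]
    rfl
  refine ⟨hcoer.continuousLinearEquivOfBilin.symm d, ?_⟩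
  have := hcoer.continuousLinearEquivOfBilin.apply_symm_apply d
  have h2 : hcoer.continuousLinearEquivOfBilin (hcoer.continuousLinearEquivOfBilin.symm d)
      = S (hcoer.continuousLinearEquivOfBilin.symm d) := hSB _
  rw [← hS]
  rw [h2] at this
  exact this

/-- Error estimate for Lavrentiev regularization under the range-type source condition:
if `T f† = y`, `f† − f* = T w`, `‖y_δ − y‖ ≤ δ` and `T fρ + ρ(fρ − f*) = y_δ`, then
`‖fρ − f†‖ ≤ δ/ρ + ρ‖w‖`. -/
theorem lavrentiev_error_estimate
    {H : Type*} [NormedAddCommGroup H] [InnerProductSpace ℝ H] [CompleteSpace H]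
    (T : H →L[ℝ] H)
    (hsa : ∀ f w : H, (inner ℝ (T f) w : ℝ) = inner ℝ f (T w))
    (hmono : ∀ ξ : H, (0 : ℝ) ≤ inner ℝ (T ξ) ξ)
    (fdag fstar w y yδ : H) (δ ρ : ℝ) (hδ : 0 < δ) (hρ : 0 < ρ)
    (hexact : T fdag = y) (hsource : fdag - fstar = T w) (hnoise : ‖yδ - y‖ ≤ δ)
    (fρ : H) (heq : T fρ + ρ • (fρ - fstar) = yδ) :
    ‖fρ - fdag‖ ≤ δ / ρ + ρ * ‖w‖ := by
  obtain ⟨v, hv⟩ := lavrentiev_surj T ρ hρ hmono (yδ - y)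
  -- key equation for the error e := fρ - fdag
  have hTρ : T fρ = yδ - ρ • (fρ - fstar) := by rw [← heq]; abel
  have hkey : T (fρ - fdag) + ρ • (fρ - fdag) = (yδ - y) - ρ • T w := by
    rw [← hsource, map_sub, hexact, hTρ]
    module
  -- bound on v : ‖v‖ ≤ δ/ρ
  have hvnorm : ‖v‖ ≤ δ / ρ := by
    have h1 : ρ * (‖v‖ * ‖v‖) ≤ ⟪T v + ρ • v, v⟫ := by
      rw [inner_add_left, real_inner_smul_left, real_inner_self_eq_norm_mul_norm]
      nlinarith [hmono v]
    rw [hv] at h1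
    have h2 : ⟪yδ - y, v⟫ ≤ δ * ‖v‖ := by
      calc ⟪yδ - y, v⟫ ≤ ‖yδ - y‖ * ‖v‖ := real_inner_le_norm _ _
        _ ≤ δ * ‖v‖ := by
            exact mul_le_mul_of_nonneg_right hnoise (norm_nonneg v)
    rcases eq_or_lt_of_le (norm_nonneg v) with h0 | h0
    · rw [← h0]; positivity
    · rw [le_div_iff₀ hρ]
      nlinarith
  -- second piece
  set u : H := (fρ - fdag) + ρ • w - v with hu
  have hSu : T u + ρ • u = (ρ * ρ) • w := by
    have hA : T (fρ - fdag) = (yδ - y) - ρ • T w - ρ • (fρ - fdag) := by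
      rw [← hkey]; abel
    have hB : T v = (yδ - y) - ρ • v := by rw [← hv]; abel
    rw [hu]
    simp only [map_sub, map_add, map_smul]
    rw [show T fρ - T fdag = T (fρ - fdag) from (map_sub T _ _).symm, hA, hB]
    module
  have hu2 : ‖u‖ * ‖u‖ ≤ ρ * ⟪w, u⟫ := by
    have h1 : ρ * (‖u‖ * ‖u‖) ≤ ⟪T u + ρ • u, u⟫ := by
      rw [inner_add_left, real_inner_smul_left, real_inner_self_eq_norm_mul_norm]
      nlinarith [hmono u]
    rw [hSu, real_inner_smul_left] at h1
    have := mul_le_mul_of_nonneg_left h1 (le_of_lt (inv_pos.mpr hρ))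
    calc ‖u‖ * ‖u‖ = ρ⁻¹ * (ρ * (‖u‖ * ‖u‖)) := by field_simp
      _ ≤ ρ⁻¹ * (ρ * ρ * ⟪w, u⟫) := this
      _ = ρ * ⟪w, u⟫ := by field_simp
  have hwu : 0 ≤ ⟪w, u⟫ := by nlinarith [mul_self_nonneg ‖u‖]
  have huw : ‖u - ρ • w‖ ≤ ρ * ‖w‖ := by
    have hsq : ‖u - ρ • w‖ * ‖u - ρ • w‖ ≤ (ρ * ‖w‖) * (ρ * ‖w‖) := by
      have hexp : ‖u - ρ • w‖ * ‖u - ρ • w‖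
          = ‖u‖ * ‖u‖ - 2 * (ρ * ⟪w, u⟫) + ρ * ρ * (‖w‖ * ‖w‖) := by
        rw [← real_inner_self_eq_norm_mul_norm, ← real_inner_self_eq_norm_mul_norm,
          ← real_inner_self_eq_norm_mul_norm, inner_sub_sub_self, real_inner_smul_left,
          real_inner_smul_right, real_inner_smul_left, real_inner_smul_right,
          real_inner_comm u w]
        ring
      rw [hexp]
      nlinarith
    nlinarith [norm_nonneg (u - ρ • w), mul_nonneg hρ.le (norm_nonneg w)]
  -- conclude
  have hdecomp : fρ - fdag = v + (u - ρ • w) := by rw [hu]; abel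
  calc ‖fρ - fdag‖ = ‖v + (u - ρ • w)‖ := by rw [hdecomp]
    _ ≤ ‖v‖ + ‖u - ρ • w‖ := norm_add_le _ _
    _ ≤ δ / ρ + ρ * ‖w‖ := add_le_add hvnorm huw
end

section
/- Let H be a real Hilbert space, T : H → H bounded linear, self-adjoint and monotone, and let f†, f*, w, y ∈ H satisfy T f† = y and f† − f* = T w. Let 0 < c̲ ≤ c̄ be constants. Then for every δ > 0, every y_δ ∈ H with ‖y_δ − y‖ ≤ δ, and every ρ with c̲·√δ ≤ ρ ≤ c̄·√δ, the unique solution f_ρ of T f_ρ + ρ(f_ρ − f*) = y_δ satisfies ‖f_ρ − f†‖ ≤ (1/c̲ + c̄·‖w‖)·√δ. In particular ‖f_ρ − f†‖ = O(√δ) as δ → 0 under this a-priori parameter choice. -/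
open RealInnerProductSpace

/-- A coercive continuous linear operator on a real Hilbert space is surjective. -/
lemma coercive_surjective
    {H : Type*} [NormedAddCommGroup H] [InnerProductSpace ℝ H] [CompleteSpace H]
    (A : H →L[ℝ] H) (C : ℝ) (hC : 0 < C) (hcoer : ∀ x : H, C * ‖x‖ * ‖x‖ ≤ ⟪A x, x⟫) :
    Function.Surjective A := by
  set B : H →L⋆[ℝ] H →L[ℝ] ℝ := (innerSL ℝ).comp A with hB
  have hBapp : ∀ v w : H, B v w = ⟪A v, w⟫ := fun v w => rfl
  have hcoB : IsCoercive B := ⟨C, hC, fun u => by rw [hBapp]; exact hcoer u⟩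
  intro t
  have hrange := hcoB.range_eq_top
  have ht : t ∈ (InnerProductSpace.continuousLinearMapOfBilin B).range := by
    rw [hrange]; trivial
  obtain ⟨v, hv⟩ := ht
  refine ⟨v, ?_⟩
  apply ext_inner_right ℝ
  intro x
  have := InnerProductSpace.continuousLinearMapOfBilin_apply (𝕜 := ℝ) B v x
  rw [show (InnerProductSpace.continuousLinearMapOfBilin B) v = t from hv] at this
  rw [this]
  exact (hBapp v x).symm

/-- Convergence rate `O(√δ)` for Lavrentiev regularization under the source condition
`f† − f* = T w` with the a-priori parameter choice `c̲√δ ≤ ρ ≤ c̄√δ`. -/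
theorem lavrentiev_rate_sqrt_delta
    {H : Type*} [NormedAddCommGroup H] [InnerProductSpace ℝ H] [CompleteSpace H]
    (T : H →L[ℝ] H)
    (hsa : ∀ f w : H, (inner ℝ (T f) w : ℝ) = inner ℝ f (T w))
    (hmono : ∀ ξ : H, (0 : ℝ) ≤ inner ℝ (T ξ) ξ)
    (fdag fstar w y : H) (hexact : T fdag = y) (hsource : fdag - fstar = T w)
    (cl cu : ℝ) (hcl : 0 < cl) (hclu : cl ≤ cu) :
    ∀ δ : ℝ, 0 < δ → ∀ yδ : H, ‖yδ - y‖ ≤ δ →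
      ∀ ρ : ℝ, cl * Real.sqrt δ ≤ ρ → ρ ≤ cu * Real.sqrt δ →
        ∀ fρ : H, T fρ + ρ • (fρ - fstar) = yδ →
          ‖fρ - fdag‖ ≤ (1 / cl + cu * ‖w‖) * Real.sqrt δ := by
  intro δ hδ yδ hyδ ρ hρl hρu fρ heq
  have hsδ : 0 < Real.sqrt δ := Real.sqrt_pos.mpr hδ
  have hρ : 0 < ρ := lt_of_lt_of_le (mul_pos hcl hsδ) hρl
  -- the operator A = T + ρ I
  set A : H →L[ℝ] H := T + ρ • ContinuousLinearMap.id ℝ H with hA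
  have hAapp : ∀ x : H, A x = T x + ρ • x := fun x => rfl
  have hcoer : ∀ x : H, ρ * ‖x‖ * ‖x‖ ≤ ⟪A x, x⟫ := by
    intro x
    rw [hAapp, inner_add_left, real_inner_smul_left, real_inner_self_eq_norm_mul_norm]
    have := hmono x
    nlinarith
  have hsurj : Function.Surjective A := coercive_surjective A ρ hρ hcoer
  obtain ⟨u, hu⟩ := hsurj w
  set v : H := T u with hv
  have hAv : A v = T w := by
    rw [hv, hAapp, ← map_smul, ← map_add, ← hAapp, hu]
  -- ‖v‖ ≤ ‖w‖
  have hvw : ‖v‖ ≤ ‖w‖ := by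
    have h1 : T (v - w) = -(ρ • v) := by
      have : T v + ρ • v = T w := by rw [← hAapp, hAv]
      rw [map_sub]
      rw [← this]
      abel
    have h2 : (0:ℝ) ≤ ⟪T (v - w), v - w⟫ := hmono _
    rw [h1, inner_neg_left, real_inner_smul_left] at h2
    have h3 : ⟪v, v - w⟫ ≤ 0 := by nlinarith
    rw [inner_sub_right, real_inner_self_eq_norm_mul_norm] at h3
    have h4 : ⟪v, w⟫ ≤ ‖v‖ * ‖w‖ := real_inner_le_norm v w
    by_cases hv0 : ‖v‖ = 0
    · rw [hv0]; positivity
    · have : 0 < ‖v‖ := lt_of_le_of_ne (norm_nonneg v) (Ne.symm hv0)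
      nlinarith
  -- the error e and the shifted quantity a
  set e : H := fρ - fdag with he
  set a : H := e + ρ • v with ha
  have hAa : A a = yδ - y := by
    rw [ha, map_add, map_smul, hAv, hAapp, he]
    have hfs : fρ - fstar = e + T w := by
      rw [he, ← hsource]; abel
    have : T fρ + ρ • (fρ - fstar) = yδ := heq
    rw [hfs, smul_add] at this
    have hTe : T e = T fρ - T fdag := by rw [he, map_sub]
    rw [hTe, hexact]
    rw [← this]
    abel
  have hanorm : ‖a‖ ≤ δ / ρ := by
    have h1 : ρ * ‖a‖ * ‖a‖ ≤ ⟪A a, a⟫ := hcoer a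
    rw [hAa] at h1
    have h2 : ⟪yδ - y, a⟫ ≤ ‖yδ - y‖ * ‖a‖ := real_inner_le_norm _ _
    have h3 : ‖yδ - y‖ * ‖a‖ ≤ δ * ‖a‖ :=
      mul_le_mul_of_nonneg_right hyδ (norm_nonneg a)
    by_cases ha0 : ‖a‖ = 0
    · rw [ha0]; positivity
    · have hap : 0 < ‖a‖ := lt_of_le_of_ne (norm_nonneg a) (Ne.symm ha0)
      rw [le_div_iff₀ hρ]
      nlinarith
  have hev : ‖e‖ ≤ ‖a‖ + ρ * ‖v‖ := by
    have : e = a - ρ • v := by rw [ha]; abel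
    rw [this]
    calc ‖a - ρ • v‖ ≤ ‖a‖ + ‖ρ • v‖ := norm_sub_le a (ρ • v)
      _ = ‖a‖ + ρ * ‖v‖ := by rw [norm_smul, Real.norm_of_nonneg hρ.le]
  -- final arithmetic
  have hδρ : δ / ρ ≤ Real.sqrt δ / cl := by
    have h1 : δ / ρ ≤ δ / (cl * Real.sqrt δ) :=
      div_le_div_of_nonneg_left hδ.le (mul_pos hcl hsδ) hρl
    have h2 : δ / (cl * Real.sqrt δ) = Real.sqrt δ / cl := by
      rw [show δ = Real.sqrt δ * Real.sqrt δ from (Real.mul_self_sqrt hδ.le).symm]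
      field_simp
      rw [Real.sqrt_sq hsδ.le]
    rw [← h2]; exact h1
  have hρv : ρ * ‖v‖ ≤ cu * Real.sqrt δ * ‖w‖ := by
    have : ρ * ‖v‖ ≤ ρ * ‖w‖ := mul_le_mul_of_nonneg_left hvw hρ.le
    calc ρ * ‖v‖ ≤ ρ * ‖w‖ := this
      _ ≤ cu * Real.sqrt δ * ‖w‖ := mul_le_mul_of_nonneg_right hρu (norm_nonneg w)
  calc ‖fρ - fdag‖ = ‖e‖ := by rw [he]
    _ ≤ ‖a‖ + ρ * ‖v‖ := hev
    _ ≤ δ / ρ + cu * Real.sqrt δ * ‖w‖ := add_le_add hanorm hρv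
    _ ≤ Real.sqrt δ / cl + cu * Real.sqrt δ * ‖w‖ := by linarith
    _ = (1 / cl + cu * ‖w‖) * Real.sqrt δ := by ring
end

section
/- Let H and V be real Hilbert spaces, A : H → V and ι : V → H bounded linear operators satisfying ⟨A ξ, v⟩_V = ⟨ξ, ι v⟩_H for all ξ ∈ H and v ∈ V. Let c ∈ V, f* ∈ H, δ > 0 and ρ > 0. Assume f† ∈ H satisfies A f† + c = 0 and the source condition f† − f* = ι v for some v ∈ V. Let c_δ ∈ V satisfy ‖c_δ − c‖ ≤ δ and let f_ρ be the unique global minimizer over H of f ↦ ‖A f + c_δ‖²_V + ρ‖f − f*‖²_H. Then (1/2)‖A f_ρ + c_δ‖²_V + ρ‖f_ρ − f†‖²_H ≤ δ² + 2ρδ‖v‖_V + 2ρ²‖v‖²_V. -/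
/-- Convergence-rate estimate under the source condition `f† − f* = ι v` (i.e.
`f† − f* ∈ range A*`): the Tikhonov minimizer with noisy data satisfies
`(1/2)‖A fρ + c_δ‖² + ρ‖fρ − f†‖² ≤ δ² + 2ρδ‖v‖ + 2ρ²‖v‖²`. -/
theorem tikhonov_rate_estimate
    {H V : Type*} [NormedAddCommGroup H] [InnerProductSpace ℝ H] [CompleteSpace H]
    [NormedAddCommGroup V] [InnerProductSpace ℝ V] [CompleteSpace V]
    (A : H →L[ℝ] V) (ι : V →L[ℝ] H)
    (hadj : ∀ (ξ : H) (v : V), (inner ℝ (A ξ) v : ℝ) = inner ℝ ξ (ι v))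
    (c : V) (fstar fdag : H) (δ ρ : ℝ) (hδ : 0 < δ) (hρ : 0 < ρ)
    (hexact : A fdag + c = 0) (v : V) (hsource : fdag - fstar = ι v)
    (cδ : V) (hnoise : ‖cδ - c‖ ≤ δ) (fρ : H)
    (hmin : ∀ f : H,
      ‖A fρ + cδ‖ ^ 2 + ρ * ‖fρ - fstar‖ ^ 2 ≤ ‖A f + cδ‖ ^ 2 + ρ * ‖f - fstar‖ ^ 2) :
    (1 / 2) * ‖A fρ + cδ‖ ^ 2 + ρ * ‖fρ - fdag‖ ^ 2 ≤
      δ ^ 2 + 2 * ρ * δ * ‖v‖ + 2 * ρ ^ 2 * ‖v‖ ^ 2 := by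
  have hAd : A fdag = -c := by
    have := hexact; linear_combination (norm := abel_nf) this
  have key := hmin fdag
  have h1 : A fdag + cδ = cδ - c := by rw [hAd]; abel
  rw [h1, hsource] at key
  -- expand ‖fρ - fstar‖² = ‖(fρ - fdag) + ι v‖²
  have hsplit : fρ - fstar = (fρ - fdag) + ι v := by rw [← hsource]; abel
  have hexp : ‖fρ - fstar‖ ^ 2 =
      ‖fρ - fdag‖ ^ 2 + 2 * inner ℝ (fρ - fdag) (ι v) + ‖ι v‖ ^ 2 := by
    rw [hsplit, @norm_add_sq_real]
  rw [hexp] at key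
  -- inner term
  have hin : (inner ℝ (fρ - fdag) (ι v) : ℝ) =
      inner ℝ (A fρ + cδ) v + inner ℝ (c - cδ) v := by
    rw [← hadj]
    have : A (fρ - fdag) = (A fρ + cδ) + (c - cδ) := by
      rw [map_sub, hAd]; abel
    rw [this, inner_add_left]
  rw [hin] at key
  have hcs1 : |(inner ℝ (A fρ + cδ) v : ℝ)| ≤ ‖A fρ + cδ‖ * ‖v‖ := abs_real_inner_le_norm _ _
  have hcs2 : |(inner ℝ (c - cδ) v : ℝ)| ≤ ‖c - cδ‖ * ‖v‖ := abs_real_inner_le_norm _ _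
  have hcc : ‖c - cδ‖ = ‖cδ - c‖ := norm_sub_rev _ _
  have hδ2 : ‖cδ - c‖ ^ 2 ≤ δ ^ 2 := by
    have := norm_nonneg (cδ - c); nlinarith
  have h2 : |(inner ℝ (c - cδ) v : ℝ)| ≤ δ * ‖v‖ := by
    calc |(inner ℝ (c - cδ) v : ℝ)| ≤ ‖c - cδ‖ * ‖v‖ := hcs2
    _ ≤ δ * ‖v‖ := by
        rw [hcc]; exact mul_le_mul_of_nonneg_right hnoise (norm_nonneg _)
  -- AM-GM: 2ρ * ‖Afρ+cδ‖ * ‖v‖ ≤ (1/2)‖Afρ+cδ‖² + 2ρ²‖v‖²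
  have habs1 := abs_le.mp hcs1
  have habs2 := abs_le.mp h2
  nlinarith [sq_nonneg (‖A fρ + cδ‖ - 2 * ρ * ‖v‖), norm_nonneg (A fρ + cδ),
    norm_nonneg v, sq_nonneg (‖fρ - fdag‖), hρ.le]
end

section
/- Let H and V be real Hilbert spaces, A : H → V and ι : V → H bounded linear operators satisfying ⟨A ξ, v⟩_V = ⟨ξ, ι v⟩_H for all ξ ∈ H and v ∈ V. Let c ∈ V, f* ∈ H, and assume f† ∈ H satisfies A f† + c = 0 and f† − f* = ι v for some v ∈ V. Let 0 < c̲ ≤ c̄. Then for every δ > 0, every c_δ ∈ V with ‖c_δ − c‖ ≤ δ, and every ρ with c̲·δ ≤ ρ ≤ c̄·δ, the unique global minimizer f_ρ of f ↦ ‖A f + c_δ‖²_V + ρ‖f − f*‖²_H satisfies ‖f_ρ − f†‖_H ≤ √(1/c̲ + 2‖v‖_V + 2c̄‖v‖²_V) · √δ. In particular ‖f_ρ − f†‖ = O(√δ) as δ → 0 under this a-priori parameter choice. -/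
set_option maxHeartbeats 2000000 in
/-- Convergence rate `O(√δ)` for the Tikhonov-regularized solutions under the source
condition `f† − f* = ι v` with the a-priori parameter choice `c̲δ ≤ ρ ≤ c̄δ`. -/
theorem tikhonov_rate_sqrt_delta
    {H V : Type*} [NormedAddCommGroup H] [InnerProductSpace ℝ H] [CompleteSpace H]
    [NormedAddCommGroup V] [InnerProductSpace ℝ V] [CompleteSpace V]
    (A : H →L[ℝ] V) (ι : V →L[ℝ] H)
    (hadj : ∀ (ξ : H) (v : V), (inner ℝ (A ξ) v : ℝ) = inner ℝ ξ (ι v))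
    (c : V) (fstar fdag : H) (hexact : A fdag + c = 0)
    (v : V) (hsource : fdag - fstar = ι v)
    (cl cu : ℝ) (hcl : 0 < cl) (hclu : cl ≤ cu) :
    ∀ δ : ℝ, 0 < δ → ∀ cδ : V, ‖cδ - c‖ ≤ δ →
      ∀ ρ : ℝ, cl * δ ≤ ρ → ρ ≤ cu * δ →
        ∀ fρ : H,
          (∀ f : H, ‖A fρ + cδ‖ ^ 2 + ρ * ‖fρ - fstar‖ ^ 2 ≤
            ‖A f + cδ‖ ^ 2 + ρ * ‖f - fstar‖ ^ 2) →
          ‖fρ - fdag‖ ≤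
            Real.sqrt (1 / cl + 2 * ‖v‖ + 2 * cu * ‖v‖ ^ 2) * Real.sqrt δ := by
  intro δ hδ cδ hcδ ρ hρl hρu fρ hmin
  have hρpos : 0 < ρ := lt_of_lt_of_le (mul_pos hcl hδ) hρl
  set e := fρ - fdag with he
  have hAdag : A fdag = -c := eq_neg_of_add_eq_zero_left hexact
  have hAe : A e = (A fρ + cδ) + (c - cδ) := by
    rw [he, map_sub, hAdag]; abel
  have hinner : (inner ℝ e (ι v) : ℝ) = inner ℝ (A fρ + cδ) v + inner ℝ (c - cδ) v := by
    rw [← hadj, hAe, inner_add_left]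
  have h1 : -(‖A fρ + cδ‖ * ‖v‖) ≤ (inner ℝ (A fρ + cδ) v : ℝ) :=
    neg_le_of_abs_le (abs_real_inner_le_norm _ _)
  have hcc : ‖c - cδ‖ ≤ δ := by rwa [norm_sub_rev] at hcδ
  have h2 : -(δ * ‖v‖) ≤ (inner ℝ (c - cδ) v : ℝ) := by
    have := neg_le_of_abs_le (abs_real_inner_le_norm (c - cδ) v)
    have hm : ‖c - cδ‖ * ‖v‖ ≤ δ * ‖v‖ :=
      mul_le_mul_of_nonneg_right hcc (norm_nonneg v)
    linarith
  have hsplit : fρ - fstar = e + ι v := by rw [he, ← hsource]; abel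
  have hexp : ‖fρ - fstar‖ ^ 2 = ‖e‖ ^ 2 + 2 * (inner ℝ e (ι v) : ℝ) + ‖ι v‖ ^ 2 := by
    rw [hsplit]; exact norm_add_sq_real e (ι v)
  have hAdc : A fdag + cδ = cδ - c := by rw [hAdag]; abel
  have hfd : ‖A fdag + cδ‖ ≤ δ := by rw [hAdc]; exact hcδ
  have hfd2 : ‖A fdag + cδ‖ ^ 2 ≤ δ ^ 2 :=
    pow_le_pow_left₀ (norm_nonneg _) hfd 2
  have hmin' := hmin fdag
  rw [hsource] at hmin'
  -- key scalar inequality: ρ‖e‖² ≤ δ² + ρ²‖v‖² + 2ρδ‖v‖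
  have hkey : ρ * ‖e‖ ^ 2 ≤ δ ^ 2 + ρ ^ 2 * ‖v‖ ^ 2 + 2 * ρ * δ * ‖v‖ := by
    nlinarith [sq_nonneg (‖A fρ + cδ‖ - ρ * ‖v‖), norm_nonneg (A fρ + cδ),
      hmin', hexp, hinner, h1, h2, hfd2, hρpos.le, norm_nonneg v]
  have hC : ‖e‖ ^ 2 ≤ (1 / cl + 2 * ‖v‖ + 2 * cu * ‖v‖ ^ 2) * δ := by
    rw [← mul_le_mul_iff_right₀ hρpos]
    have hδ2 : δ ^ 2 ≤ ρ * δ * (1 / cl) := by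
      rw [mul_one_div, le_div_iff₀ hcl]; nlinarith
    have hρ2 : ρ ^ 2 ≤ cu * δ * ρ := by nlinarith
    have h3 : ρ ^ 2 * ‖v‖ ^ 2 ≤ cu * δ * ρ * ‖v‖ ^ 2 :=
      mul_le_mul_of_nonneg_right hρ2 (sq_nonneg _)
    have h4 : 0 ≤ cu * δ * ρ * ‖v‖ ^ 2 :=
      mul_nonneg (mul_nonneg (mul_nonneg (hcl.trans_le hclu).le hδ.le) hρpos.le)
        (sq_nonneg _)
    linarith [hkey]
  have hCnn : 0 ≤ 1 / cl + 2 * ‖v‖ + 2 * cu * ‖v‖ ^ 2 := by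
    have : 0 < 1 / cl := by positivity
    nlinarith [norm_nonneg v, sq_nonneg ‖v‖, hcl.trans_le hclu]
  calc ‖e‖ = Real.sqrt (‖e‖ ^ 2) := by rw [Real.sqrt_sq (norm_nonneg e)]
    _ ≤ Real.sqrt ((1 / cl + 2 * ‖v‖ + 2 * cu * ‖v‖ ^ 2) * δ) := Real.sqrt_le_sqrt hC
    _ = Real.sqrt (1 / cl + 2 * ‖v‖ + 2 * cu * ‖v‖ ^ 2) * Real.sqrt δ :=
        Real.sqrt_mul hCnn δ
end
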